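/- arXiv:1803.01332 — 4 statements merged into one kernel-verified Lean document; each statement's English description precedes it below -/
import Mathlib

section
/- Let X be a Baire topological space and let F be a minimal cusco map from X to ℝ. Then the set S(F) = {x ∈ X : F(x) is a singleton} is a dense Gδ subset of X. -/
open Set Topology TopologicalSpace

/-- The set of values of a set-valued map (identified with its graph) at a point. -/
def valuesAt {X : Type*} (F : Set (X × ℝ)) (x : X) : Set ℝ := {y | (x, y) ∈ F}

/-- A set-valued map (identified with its graph) is cusco: upper semicontinuous at every
point, with nonempty compact convex values. -/
def IsCusco {X : Type*} [TopologicalSpace X] (F : Set (X × ℝ)) : Prop :=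
  (∀ x : X, ∀ V : Set ℝ, IsOpen V → valuesAt F x ⊆ V →
    ∃ U : Set X, IsOpen U ∧ x ∈ U ∧ ∀ u ∈ U, valuesAt F u ⊆ V) ∧
  (∀ x : X, (valuesAt F x).Nonempty ∧ IsCompact (valuesAt F x) ∧ Convex ℝ (valuesAt F x))

/-- A minimal cusco map, i.e. a cusco map containing no proper cusco submap. -/
def IsMinimalCusco {X : Type*} [TopologicalSpace X] (F : Set (X × ℝ)) : Prop :=
  IsCusco F ∧ ∀ G : Set (X × ℝ), IsCusco G → G ⊆ F → G = F

/-- `L(X)`: all cusco maps from `X` to `ℝ`. -/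
def LSet (X : Type*) [TopologicalSpace X] : Set (Set (X × ℝ)) := {F | IsCusco F}

/-- `L₀(X)`: cusco maps that are single-valued at each isolated point. -/
def L0Set (X : Type*) [TopologicalSpace X] : Set (Set (X × ℝ)) :=
  {F | IsCusco F ∧ ∀ x : X, IsOpen ({x} : Set X) → ∃ y : ℝ, valuesAt F x = {y}}

/-- `MC(X)`: all minimal cusco maps from `X` to `ℝ`. -/
def MCSet (X : Type*) [TopologicalSpace X] : Set (Set (X × ℝ)) := {F | IsMinimalCusco F}

/-- The upper Vietoris topology on a family of subsets of `X × ℝ`. -/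
def upperVietoris {X : Type*} [TopologicalSpace X] (S : Set (Set (X × ℝ))) :
    TopologicalSpace S :=
  .generateFrom {U | ∃ W : Set (X × ℝ), IsOpen W ∧ U = {A : S | (A : Set (X × ℝ)) ⊆ W}}

/-- The Vietoris topology on a family of subsets of `X × ℝ`. -/
def vietoris {X : Type*} [TopologicalSpace X] (S : Set (Set (X × ℝ))) :
    TopologicalSpace S :=
  .generateFrom
    ({U | ∃ W : Set (X × ℝ), IsOpen W ∧ U = {A : S | (A : Set (X × ℝ)) ⊆ W}} ∪
     {U | ∃ W : Set (X × ℝ), IsOpen W ∧ U = {A : S | ((A : Set (X × ℝ)) ∩ W).Nonempty}})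

/-- The graph of a function `X → ℝ`. -/
def graphOf {X : Type*} (f : X → ℝ) : Set (X × ℝ) := {p | p.2 = f p.1}

/-- `X` is countably compact: every countable open cover has a finite subcover. -/
def CountablyCompact (X : Type*) [TopologicalSpace X] : Prop :=
  ∀ U : ℕ → Set X, (∀ n, IsOpen (U n)) → (⋃ n, U n) = Set.univ →
    ∃ t : Finset ℕ, (⋃ n ∈ t, U n) = Set.univ

/-- Key cutting lemma: if a minimal cusco `F` has a value `> b` at some point of an open
set `U`, then there is a nonempty open `V ⊆ U` on which all values of `F` are `> b`. -/
lemma cut_lemma {X : Type*} [TopologicalSpace X] (F : Set (X × ℝ)) (hF : IsMinimalCusco F)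
    (U : Set X) (hU : IsOpen U) (x₀ : X) (hx₀ : x₀ ∈ U) (b : ℝ)
    (hb : ∃ y ∈ valuesAt F x₀, b < y) :
    ∃ V : Set X, IsOpen V ∧ V.Nonempty ∧ V ⊆ U ∧ ∀ v ∈ V, valuesAt F v ⊆ Set.Ioi b := by
  by_contra hcon
  push_neg at hcon
  -- Step 1: every point of U has a value ≤ b
  have step1 : ∀ x ∈ U, ∃ y ∈ valuesAt F x, y ≤ b := by
    intro x hx
    by_contra h
    push_neg at h
    have hsub : valuesAt F x ⊆ Set.Ioi b := fun y hy => (h y hy)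
    obtain ⟨U₁, hU₁o, hxU₁, hU₁⟩ := hF.1.1 x (Set.Ioi b) isOpen_Ioi hsub
    obtain ⟨v, hv, hns⟩ := hcon (U ∩ U₁) (hU.inter hU₁o) ⟨x, hx, hxU₁⟩
      Set.inter_subset_left
    exact hns (hU₁ v hv.2)
  -- Step 2: define the sub-cusco G
  set G : Set (X × ℝ) := F \ (U ×ˢ Set.Ioi b) with hGdef
  have hGval_in : ∀ x ∈ U, valuesAt G x = valuesAt F x ∩ Set.Iic b := by
    intro x hx
    ext y
    simp only [valuesAt, hGdef, Set.mem_diff, Set.mem_prod, Set.mem_setOf_eq,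
      Set.mem_inter_iff, Set.mem_Ioi, Set.mem_Iic]
    constructor
    · rintro ⟨h1, h2⟩
      exact ⟨h1, not_lt.mp fun hby => h2 ⟨hx, hby⟩⟩
    · rintro ⟨h1, h2⟩
      exact ⟨h1, fun h => absurd h.2 (not_lt.mpr h2)⟩
  have hGval_out : ∀ x ∉ U, valuesAt G x = valuesAt F x := by
    intro x hx
    ext y
    simp only [valuesAt, hGdef, Set.mem_diff, Set.mem_prod, Set.mem_setOf_eq]
    exact ⟨fun h => h.1, fun h => ⟨h, fun hc => hx hc.1⟩⟩
  have hGsubF : ∀ x, valuesAt G x ⊆ valuesAt F x := by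
    intro x y hy; exact hy.1
  have hGcusco : IsCusco G := by
    constructor
    · intro x V hV hVsub
      by_cases hx : x ∈ U
      · have hV' : IsOpen (V ∪ Set.Ioi b) := hV.union isOpen_Ioi
        have hFsub : valuesAt F x ⊆ V ∪ Set.Ioi b := by
          intro y hy
          by_cases hyb : y ≤ b
          · left
            exact hVsub (by rw [hGval_in x hx]; exact ⟨hy, hyb⟩)
          · right; exact not_le.mp hyb
        obtain ⟨U₁, hU₁o, hxU₁, hU₁⟩ := hF.1.1 x _ hV' hFsub
        refine ⟨U₁ ∩ U, hU₁o.inter hU, ⟨hxU₁, hx⟩, ?_⟩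
        intro u hu y hy
        rw [hGval_in u hu.2] at hy
        rcases hU₁ u hu.1 hy.1 with h | h
        · exact h
        · exact absurd (Set.mem_Ioi.mp h) (not_lt.mpr hy.2)
      · have hFsub : valuesAt F x ⊆ V := by rw [← hGval_out x hx]; exact hVsub
        obtain ⟨U₁, hU₁o, hxU₁, hU₁⟩ := hF.1.1 x V hV hFsub
        exact ⟨U₁, hU₁o, hxU₁, fun u hu => (hGsubF u).trans (hU₁ u hu)⟩
    · intro x
      obtain ⟨hne, hcpt, hcvx⟩ := hF.1.2 x
      by_cases hx : x ∈ U
      · rw [hGval_in x hx]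
        obtain ⟨y, hy, hyb⟩ := step1 x hx
        exact ⟨⟨y, hy, hyb⟩, hcpt.inter_right isClosed_Iic, hcvx.inter (convex_Iic b)⟩
      · rw [hGval_out x hx]
        exact ⟨hne, hcpt, hcvx⟩
  have hGF : G = F := hF.2 G hGcusco Set.diff_subset
  obtain ⟨y, hy, hby⟩ := hb
  have : (x₀, y) ∈ G := hGF ▸ hy
  exact this.2 ⟨hx₀, hby⟩

/-- For a Baire space `X` and a minimal cusco map `F : X ⇉ ℝ`, the set of points where
`F` is single-valued is a dense Gδ subset of `X`. -/
theorem singletonSet_dense_Gdelta {X : Type*} [TopologicalSpace X] [BaireSpace X]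
    (F : Set (X × ℝ)) (hF : IsMinimalCusco F) :
    Dense {x : X | ∃ y : ℝ, valuesAt F x = {y}} ∧
      IsGδ {x : X | ∃ y : ℝ, valuesAt F x = {y}} := by
  have hne : ∀ x, (valuesAt F x).Nonempty := fun x => (hF.1.2 x).1
  have hcpt : ∀ x, IsCompact (valuesAt F x) := fun x => (hF.1.2 x).2.1
  have hcvx : ∀ x, Convex ℝ (valuesAt F x) := fun x => (hF.1.2 x).2.2
  have hSup : ∀ x, sSup (valuesAt F x) ∈ valuesAt F x :=
    fun x => (hcpt x).sSup_mem (hne x)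
  have hInf : ∀ x, sInf (valuesAt F x) ∈ valuesAt F x :=
    fun x => (hcpt x).sInf_mem (hne x)
  have hleSup : ∀ x, ∀ y ∈ valuesAt F x, y ≤ sSup (valuesAt F x) :=
    fun x y hy => le_csSup (hcpt x).bddAbove hy
  have hInfle : ∀ x, ∀ y ∈ valuesAt F x, sInf (valuesAt F x) ≤ y :=
    fun x y hy => csInf_le (hcpt x).bddBelow hy
  set A : ℕ → Set X :=
    fun n => {x | sSup (valuesAt F x) - sInf (valuesAt F x) < 1 / (n + 1)} with hA
  -- each A n is open
  have hopen : ∀ n, IsOpen (A n) := by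
    intro n
    rw [isOpen_iff_forall_mem_open]
    intro x hx
    simp only [hA, Set.mem_setOf_eq] at hx
    set M := sSup (valuesAt F x)
    set m := sInf (valuesAt F x)
    set δ : ℝ := (1 / (n + 1) - (M - m)) / 2 with hδ
    have hδpos : 0 < δ := by rw [hδ]; linarith
    have hVsub : valuesAt F x ⊆ Set.Ioo (m - δ) (M + δ) := by
      intro y hy
      exact ⟨lt_of_lt_of_le (by linarith) (hInfle x y hy),
        lt_of_le_of_lt (hleSup x y hy) (by linarith)⟩
    obtain ⟨U₁, hU₁o, hxU₁, hU₁⟩ := hF.1.1 x _ isOpen_Ioo hVsub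
    refine ⟨U₁, ?_, hU₁o, hxU₁⟩
    intro u hu
    have h1 := hU₁ u hu (hSup u)
    have h2 := hU₁ u hu (hInf u)
    simp only [hA, Set.mem_setOf_eq]
    have := h1.2
    have := h2.1
    linarith
  -- each A n is dense
  have hdense : ∀ n, Dense (A n) := by
    intro n
    rw [dense_iff_inter_open]
    intro U hU ⟨x₀, hx₀⟩
    set ε : ℝ := 1 / (n + 1) with hε
    have hεpos : 0 < ε := by positivity
    set M₀ := sSup (valuesAt F x₀) with hM₀
    have hVsub : valuesAt F x₀ ⊆ Set.Iio (M₀ + ε / 4) := by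
      intro y hy
      exact lt_of_le_of_lt (hleSup x₀ y hy) (by linarith)
    obtain ⟨U₁, hU₁o, hxU₁, hU₁⟩ := hF.1.1 x₀ _ isOpen_Iio hVsub
    obtain ⟨V, hVo, ⟨w, hw⟩, hVsubU, hV⟩ := cut_lemma F hF (U ∩ U₁) (hU.inter hU₁o)
      x₀ ⟨hx₀, hxU₁⟩ (M₀ - ε / 4) ⟨M₀, hSup x₀, by linarith⟩
    refine ⟨w, (hVsubU hw).1, ?_⟩
    have h1 : sSup (valuesAt F w) < M₀ + ε / 4 := hU₁ w (hVsubU hw).2 (hSup w)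
    have h2 : M₀ - ε / 4 < sInf (valuesAt F w) := hV w hw (hInf w)
    simp only [hA, Set.mem_setOf_eq]
    linarith
  -- the singleton set equals the intersection
  have hSeq : {x : X | ∃ y : ℝ, valuesAt F x = {y}} = ⋂ n, A n := by
    ext x
    simp only [Set.mem_setOf_eq, Set.mem_iInter, hA]
    constructor
    · rintro ⟨y, hy⟩ n
      rw [hy]
      simp only [csSup_singleton, csInf_singleton, sub_self]
      positivity
    · intro h
      have hmM : sInf (valuesAt F x) = sSup (valuesAt F x) := by
        by_contra hne'
        have hlem := hInfle x _ (hSup x)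
        have hlt : 0 < sSup (valuesAt F x) - sInf (valuesAt F x) := by
          rcases lt_or_eq_of_le hlem with h' | h'
          · linarith
          · exact absurd h' hne'
        obtain ⟨k, hk⟩ := exists_nat_one_div_lt hlt
        exact absurd (h k) (not_lt.mpr hk.le)
      refine ⟨sInf (valuesAt F x), Set.Subset.antisymm ?_ ?_⟩
      · intro y hy
        have h1 := hInfle x y hy
        have h2 := hleSup x y hy
        have : y = sInf (valuesAt F x) := by linarith
        simp [this]
      · simp only [Set.singleton_subset_iff]
        exact hInf x
  rw [hSeq]
  exact ⟨dense_iInter_of_isOpen hopen hdense, .iInter fun n => (hopen n).isGδ⟩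
end

section
/- Let X be a Tychonoff (completely regular Hausdorff) space. The following are equivalent: (1) C(X) with the Vietoris topology τ_V is metrizable; (2) (C(X), τ_V) is first countable; (3) (C(X), τ_V) is a Fréchet–Urysohn space; (4) (C(X), τ_V) is a sequential space; (5) X is countably compact; (6) on C(X), the Vietoris topology τ_V coincides with the topology τ_U of uniform convergence (the topology of the supremum metric d(f,g) = sup_{x∈X} |f(x) − g(x)|). -/
open Set Topology TopologicalSpace

/-- The Vietoris topology on `C(X, ℝ)`, continuous functions being identified with
their graphs in `X × ℝ`. -/
def cxVietoris (X : Type*) [TopologicalSpace X] : TopologicalSpace C(X, ℝ) :=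
  .generateFrom
    ({U | ∃ W : Set (X × ℝ), IsOpen W ∧ U = {f : C(X, ℝ) | graphOf ⇑f ⊆ W}} ∪
     {U | ∃ W : Set (X × ℝ), IsOpen W ∧ U = {f : C(X, ℝ) | (graphOf ⇑f ∩ W).Nonempty}})

/-- The topology of uniform convergence on `C(X, ℝ)`, generated by the balls of the
(possibly infinite-valued) supremum metric `d(f,g) = sup_x |f x - g x|`. -/
def cxUniform (X : Type*) [TopologicalSpace X] : TopologicalSpace C(X, ℝ) :=
  .generateFrom {B | ∃ (f : C(X, ℝ)) (ε : ℝ), 0 < ε ∧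
    B = {g : C(X, ℝ) | ∃ c : ℝ, c < ε ∧ ∀ x : X, |g x - f x| ≤ c}}

/-!
`τ_U` is metrizable, being induced by the supremum extended metric of `X →ᵤ ℝ`, and `τ_V` is
always finer than it: the uniform `ε`-ball around `f` contains `W⁺` for the tube
`W = {(x, y) | |y - f x| < ε}`. Every `W⁻` is `τ_U`-open, and so is `W⁺` when `X` is countably
compact: the increasing open sets `interior {x | W ∋ (x, y) whenever |y - f x| ≤ 1 / (n + 1)}`
cover `X`, so one of them is `X` and `W` contains a uniform tube around the graph of `f`.

If `X` is not countably compact it carries a locally finite sequence `p`, and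
`A = {f | f (p i) ≠ 0 for infinitely many i}` shows that `τ_V` is not sequential. `A` is
sequentially closed: if `f k → g` while each `f k` differs from `g` at some `p i` with `i ≥ k`,
removing the points `(p i, f k (p i))` (a locally finite family) from `X × ℝ` leaves an open `W`
with `g ∈ W⁺` and no `f k ∈ W⁺`. Yet `0 ∈ closure A \ A`: a neighbourhood of `0` contains the
functions whose graph lies in some open `W ⊇ X × {0}` and which vanish on some finite `Z`, and
`∑ εₙ ψₙ / 2ⁿ⁺¹` is one of them for bumps `ψₙ` at `p n` vanishing on `Z` with `W` containing
`{x} × [-εₙ, εₙ]` wherever `ψₙ x > 0`, because this weighted average of the `εₙ ψₙ x` is bounded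
by one of its positive terms.
-/

section

open Filter unitInterval

@[simp]
theorem mem_graphOf {X : Type*} {f : X → ℝ} {x : X} {y : ℝ} : (x, y) ∈ graphOf f ↔ y = f x :=
  Iff.rfl

variable {X : Type*} [TopologicalSpace X]

theorem CountablyCompact.exists_eq_univ_of_monotone (hX : CountablyCompact X) {U : ℕ → Set X}
    (hU : ∀ n, IsOpen (U n)) (hmono : Monotone U) (hcover : ⋃ n, U n = univ) :
    ∃ n, U n = univ := by
  obtain ⟨t, ht⟩ := hX U hU hcover
  exact ⟨t.sup id, eq_univ_of_univ_subset <| ht ▸ iUnion₂_subset fun n hn =>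
    hmono (Finset.le_sup (f := id) hn)⟩

theorem exists_locallyFinite_of_not_countablyCompact (hX : ¬CountablyCompact X) :
    ∃ p : ℕ → X, LocallyFinite fun n => ({p n} : Set X) := by
  simp only [CountablyCompact, not_forall, not_exists] at hX
  obtain ⟨U, hU, hcover, hfin⟩ := hX
  have hnot : ∀ n, ∃ x, x ∉ accumulate U n := fun n => by
    by_contra! h
    exact hfin (Finset.Iic n) (eq_univ_of_forall fun x => by simpa [mem_accumulate] using h x)
  choose p hp using hnot
  refine ⟨p, fun x => ?_⟩
  obtain ⟨m, hm⟩ := mem_iUnion.1 (hcover ▸ mem_univ x)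
  refine ⟨U m, (hU m).mem_nhds hm, (finite_lt_nat m).subset fun n ⟨_, hpn, hn⟩ =>
    show n < m from ?_⟩
  by_contra! hmn
  exact hp n (mem_accumulate.2 ⟨m, hmn, (mem_singleton_iff.1 hpn) ▸ hn⟩)

theorem exists_local_tube {W : Set (X × ℝ)} (hW : IsOpen W) {f : C(X, ℝ)} {x : X}
    (hx : (x, f x) ∈ W) :
    ∃ u, IsOpen u ∧ x ∈ u ∧ ∃ ε > 0, ∀ x' ∈ u, ∀ y, |y - f x'| ≤ ε → (x', y) ∈ W := by
  have hφ : Continuous fun q : X × ℝ => (q.1, f q.1 + q.2) := by fun_prop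
  have hnhds : (fun q : X × ℝ => (q.1, f q.1 + q.2)) ⁻¹' W ∈ 𝓝 (x, 0) :=
    hφ.continuousAt.preimage_mem_nhds (by simpa using hW.mem_nhds hx)
  obtain ⟨u, v, hu, hxu, hv, h0v, huv⟩ := mem_nhds_prod_iff'.1 hnhds
  obtain ⟨ε, hε, hball⟩ := Metric.isOpen_iff.1 hv 0 h0v
  refine ⟨u, hu, hxu, ε / 2, half_pos hε, fun x' hx' y hy => ?_⟩
  have hv' : y - f x' ∈ v := hball (by rw [Metric.mem_ball, Real.dist_0_eq_abs]; linarith)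
  simpa using @huv (x', y - f x') ⟨hx', hv'⟩

theorem CountablyCompact.exists_uniform_tube (hX : CountablyCompact X) {W : Set (X × ℝ)}
    (hW : IsOpen W) {f : C(X, ℝ)} (hf : graphOf f ⊆ W) :
    ∃ ε > 0, ∀ x y, |y - f x| ≤ ε → (x, y) ∈ W := by
  set T : ℕ → Set X := fun n => {x | ∀ y, |y - f x| ≤ 1 / (n + 1) → (x, y) ∈ W}
  have hmono : Monotone T := fun m n hmn x hx y hy =>
    hx y (hy.trans (Nat.one_div_le_one_div hmn))
  have hcover : ⋃ n, interior (T n) = univ := by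
    refine eq_univ_of_forall fun x => ?_
    obtain ⟨u, hu, hxu, ε, hε, htube⟩ := exists_local_tube hW (hf (mem_graphOf.2 rfl))
    obtain ⟨n, hn⟩ := exists_nat_one_div_lt hε
    exact mem_iUnion.2 ⟨n, mem_interior.2 ⟨u, fun x' hx' y hy =>
      htube x' hx' y (hy.trans hn.le), hu, hxu⟩⟩
  obtain ⟨n, hn⟩ := hX.exists_eq_univ_of_monotone (fun _ => isOpen_interior)
    (fun _ _ h => interior_mono (hmono h)) hcover
  exact ⟨1 / (n + 1), Nat.one_div_pos_of_nat, fun x =>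
    interior_subset (hn ▸ mem_univ x : x ∈ interior (T n))⟩

theorem hasBasis_nhds_induced_uniformFun (f : C(X, ℝ)) :
    (@nhds _ (.induced (fun g : C(X, ℝ) => UniformFun.ofFun ⇑g) inferInstance) f).HasBasis
      (fun ε : ℝ => 0 < ε) fun ε => {g | ∀ x, |g x - f x| ≤ ε} := by
  rw [nhds_induced]
  convert (UniformFun.hasBasis_nhds_of_basis X ℝ _ Metric.uniformity_basis_dist_le).comap _
    using 1
  ext ε g
  simp [UniformFun.gen, Real.dist_eq, abs_sub_comm]

theorem cxUniform_eq_induced :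
    cxUniform X = .induced (fun g : C(X, ℝ) => UniformFun.ofFun ⇑g) inferInstance := by
  have hB := hasBasis_nhds_induced_uniformFun (X := X)
  refine le_antisymm (le_of_nhds_le_nhds fun f => (hB f).ge_iff.2 fun ε hε => ?_)
    (le_generateFrom ?_)
  · refine mem_of_superset (@IsOpen.mem_nhds _ (cxUniform X) _ _
      (isOpen_generateFrom_of_mem ⟨f, ε, hε, rfl⟩) ⟨0, hε, fun x => by simp⟩) ?_
    rintro g ⟨c, hc, hg⟩ x
    exact (hg x).trans hc.le
  · rintro _ ⟨f, ε, hε, rfl⟩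
    let _ : TopologicalSpace C(X, ℝ) :=
      .induced (fun g : C(X, ℝ) => UniformFun.ofFun ⇑g) inferInstance
    refine isOpen_iff_mem_nhds.2 fun g ⟨c, hc, hg⟩ => (hB g).mem_iff.2 ⟨_, half_pos (sub_pos.2 hc),
      fun h hh => ⟨c + (ε - c) / 2, by linarith, fun x => ?_⟩⟩
    calc |h x - f x| ≤ |h x - g x| + |g x - f x| := abs_sub_le _ _ _
      _ ≤ (ε - c) / 2 + c := add_le_add (hh x) (hg x)
      _ = c + (ε - c) / 2 := add_comm _ _

theorem hasBasis_nhds_cxUniform (f : C(X, ℝ)) :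
    (@nhds _ (cxUniform X) f).HasBasis (fun ε : ℝ => 0 < ε) fun ε => {g | ∀ x, |g x - f x| ≤ ε} :=
  cxUniform_eq_induced (X := X) ▸ hasBasis_nhds_induced_uniformFun f

theorem metrizableSpace_cxUniform : @MetrizableSpace C(X, ℝ) (cxUniform X) :=
  letI := cxUniform X
  (Topology.IsEmbedding.mk ⟨cxUniform_eq_induced⟩
    fun _ _ h => DFunLike.coe_injective (UniformFun.ofFun.injective h)).metrizableSpace

theorem setOf_graphOf_subset_mem_nhds_cxVietoris {W : Set (X × ℝ)} (hW : IsOpen W)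
    {g : C(X, ℝ)} (hg : graphOf g ⊆ W) : {f : C(X, ℝ) | graphOf f ⊆ W} ∈ @nhds _ (cxVietoris X) g :=
  @IsOpen.mem_nhds _ (cxVietoris X) _ _ (isOpen_generateFrom_of_mem (Or.inl ⟨W, hW, rfl⟩)) hg

theorem cxVietoris_le_cxUniform : cxVietoris X ≤ cxUniform X := by
  refine le_of_nhds_le_nhds fun f => (hasBasis_nhds_cxUniform f).ge_iff.2 fun ε hε => ?_
  have hW : IsOpen {q : X × ℝ | |q.2 - f q.1| < ε} := isOpen_lt (by fun_prop) continuous_const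
  refine mem_of_superset (setOf_graphOf_subset_mem_nhds_cxVietoris hW ?_) ?_
  · rintro ⟨x, y⟩ (rfl : y = f x)
    simpa using hε
  · exact fun g hg x => (hg (mem_graphOf.2 rfl)).le

theorem cxUniform_le_cxVietoris (hX : CountablyCompact X) : cxUniform X ≤ cxVietoris X := by
  let _ := cxUniform X
  refine le_generateFrom fun s hs => isOpen_iff_mem_nhds.2 ?_
  rcases hs with ⟨W, hW, rfl⟩ | ⟨W, hW, rfl⟩
  · intro f hf
    obtain ⟨ε, hε, htube⟩ := hX.exists_uniform_tube hW hf
    exact (hasBasis_nhds_cxUniform f).mem_iff.2 ⟨ε, hε, fun g hg q (hq : q.2 = g q.1) =>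
      htube q.1 q.2 (hq ▸ hg q.1)⟩
  · rintro f ⟨⟨x, y⟩, rfl : y = f x, hxW⟩
    obtain ⟨u, -, hxu, ε, hε, htube⟩ := exists_local_tube hW hxW
    exact (hasBasis_nhds_cxUniform f).mem_iff.2 ⟨ε, hε, fun g hg =>
      ⟨(x, g x), rfl, htube x hxu _ (hg x)⟩⟩

theorem exists_subset_of_mem_nhds_cxVietoris {g : C(X, ℝ)} {U : Set C(X, ℝ)}
    (hU : U ∈ @nhds _ (cxVietoris X) g) :
    ∃ W, IsOpen W ∧ graphOf g ⊆ W ∧ ∃ Z : Set X, Z.Finite ∧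
      {f : C(X, ℝ) | graphOf f ⊆ W ∧ EqOn f g Z} ⊆ U := by
  let ι := {q : Set (X × ℝ) × Set X // IsOpen q.1 ∧ graphOf g ⊆ q.1 ∧ q.2.Finite}
  let B : ι → Set C(X, ℝ) := fun q => {f | graphOf f ⊆ q.1.1 ∧ EqOn f g q.1.2}
  have : Nonempty ι := ⟨⟨(univ, ∅), isOpen_univ, subset_univ _, finite_empty⟩⟩
  have hdir : Directed (· ≥ ·) fun q => 𝓟 (B q) := fun q r =>
    ⟨⟨(q.1.1 ∩ r.1.1, q.1.2 ∪ r.1.2), q.2.1.inter r.2.1, subset_inter q.2.2.1 r.2.2.1,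
      q.2.2.2.union r.2.2.2⟩,
      principal_mono.2 fun _ hf => ⟨hf.1.trans inter_subset_left, hf.2.mono subset_union_left⟩,
      principal_mono.2 fun _ hf => ⟨hf.1.trans inter_subset_right, hf.2.mono subset_union_right⟩⟩
  have hle : ⨅ q, 𝓟 (B q) ≤ @nhds _ (cxVietoris X) g := by
    rw [cxVietoris, nhds_generateFrom]
    refine le_iInf₂ fun s ⟨hgs, hs⟩ => le_principal_iff.2 ?_
    rcases hs with ⟨W, hW, rfl⟩ | ⟨W, hW, rfl⟩
    · exact mem_iInf_of_mem (⟨(W, ∅), hW, hgs, finite_empty⟩ : ι) <| mem_principal.2 fun _ hf =>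
        hf.1
    · obtain ⟨⟨x, y⟩, rfl : y = g x, hxW⟩ := hgs
      refine mem_iInf_of_mem (⟨(univ, {x}), isOpen_univ, subset_univ _, finite_singleton x⟩ : ι)
        <| mem_principal.2 fun f hf => ⟨(x, f x), rfl, ?_⟩
      rwa [hf.2 rfl]
  obtain ⟨q, hq⟩ := (mem_iInf_of_directed hdir U).1 (hle hU)
  exact ⟨q.1.1, q.2.1, q.2.2.1, q.1.2, q.2.2.2, hq⟩

theorem exists_eq_of_tendsto_cxVietoris [T1Space X] {p : ℕ → X}
    (hp : LocallyFinite fun i => ({p i} : Set X)) {f : ℕ → C(X, ℝ)} {g : C(X, ℝ)}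
    (hfg : Tendsto f atTop (@nhds _ (cxVietoris X) g)) :
    ∃ k, ∀ i ≥ k, f k (p i) = g (p i) := by
  by_contra! h
  choose ι hι hne using h
  set E : ℕ → Set ℝ := fun i => (fun k => f k (p i)) '' {k | ι k = i}
  have hE : ∀ i, IsClosed (E i) := fun i =>
    (((finite_le_nat i).subset fun k (hk : ι k = i) => hk ▸ hι k).image _).isClosed
  have hW : IsOpen (⋃ i, {p i} ×ˢ E i)ᶜ :=
    ((hp.prod_right E).isClosed_iUnion fun i => isClosed_singleton.prod (hE i)).isOpen_compl
  have hgW : graphOf g ⊆ (⋃ i, {p i} ×ˢ E i)ᶜ := by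
    rintro ⟨x, y⟩ (rfl : y = g x) hx
    simp only [mem_iUnion, mem_prod, mem_singleton_iff, E, mem_image] at hx
    obtain ⟨_, rfl, k, rfl, hk⟩ := hx
    exact hne k hk
  obtain ⟨k, hk⟩ := (hfg.eventually_mem (setOf_graphOf_subset_mem_nhds_cxVietoris hW hgW)).exists
  exact hk (mem_graphOf.2 rfl) (mem_iUnion.2 ⟨ι k, rfl, k, rfl, rfl⟩)

theorem exists_bump [CompletelyRegularSpace X] {x : X} {U : Set X} (hU : IsOpen U) (hx : x ∈ U) :
    ∃ ψ : C(X, I), ψ x = 1 ∧ ∀ y ∉ U, ψ y = 0 := by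
  obtain ⟨f, hf, hfx, hf1⟩ := CompletelyRegularSpace.completely_regular_isOpen x U hU hx
  exact ⟨⟨fun y => σ (f y), continuous_symm.comp hf⟩, by simp [hfx], fun y hy => by
    simp [hf1 hy]⟩

theorem exists_bump_in_tube [CompletelyRegularSpace X] {W : Set (X × ℝ)} (hW : IsOpen W)
    {Z : Set X} (hZ : IsClosed Z) {x₀ : X} (hx₀ : (x₀, (0 : ℝ)) ∈ W) :
    ∃ ε > 0, ε ≤ 1 ∧ ∃ ψ : C(X, I), (x₀ ∉ Z → ψ x₀ = 1) ∧
      ∀ x, 0 < (ψ x : ℝ) → x ∉ Z ∧ ∀ y, |y| ≤ ε → (x, y) ∈ W := by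
  obtain ⟨u, hu, hxu, ε, hε, htube⟩ := exists_local_tube (f := 0) hW hx₀
  by_cases hxZ : x₀ ∈ Z
  · exact ⟨1, one_pos, le_rfl, 0, fun h => absurd hxZ h, fun x hx => by simp at hx⟩
  obtain ⟨ψ, hψx, hψ0⟩ := exists_bump (hu.inter hZ.isOpen_compl) ⟨hxu, hxZ⟩
  refine ⟨min ε 1, lt_min hε one_pos, min_le_right _ _, ψ, fun _ => hψx, fun x hx => ?_⟩
  have hx' : x ∈ u ∩ Zᶜ := by
    by_contra h
    simp [hψ0 x h] at hx
  refine ⟨hx'.2, fun y hy => ?_⟩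
  simpa using htube x hx'.1 y (by simpa using hy.trans (min_le_left _ _))

theorem exists_tsum_div_two_pow_le {a : ℕ → ℝ} (h0 : ∀ n, 0 ≤ a n) {j : ℕ} (hj : 0 < a j) :
    ∃ i, 0 < a i ∧ ∑' n, a n / 2 / 2 ^ n ≤ a i := by
  by_contra! h
  set s := ∑' n, a n / 2 / 2 ^ n
  have hle : ∀ n, a n ≤ s := fun n => (h0 n).eq_or_lt.elim (fun h' => h' ▸ (h0 j).trans (h j hj).le)
    fun h' => (h n h').le
  have hlt : s < ∑' n, s / 2 / 2 ^ n :=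
    (summable_geometric_two' s).tsum_lt_tsum_of_nonneg (i := j)
      (fun n => by have := h0 n; positivity)
      (fun n => by gcongr; exact hle n) (by gcongr; exact h j hj)
  rw [tsum_geometric_two'] at hlt
  exact hlt.false

theorem exists_graphOf_subset_eqOn_zero [CompletelyRegularSpace X] {W : Set (X × ℝ)}
    (hW : IsOpen W) (hW0 : ∀ x, (x, (0 : ℝ)) ∈ W) {Z : Set X} (hZ : IsClosed Z) (p : ℕ → X) :
    ∃ f : C(X, ℝ), graphOf f ⊆ W ∧ EqOn f 0 Z ∧ ∀ i, p i ∉ Z → f (p i) ≠ 0 := by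
  choose ε hε hε1 ψ hψp hψW using fun i => exists_bump_in_tube hW hZ (hW0 (p i))
  set a : ℕ → X → ℝ := fun n x => ε n * ψ n x
  have ha0 : ∀ n x, 0 ≤ a n x := fun n x => mul_nonneg (hε n).le (ψ n x).2.1
  have ha1 : ∀ n x, a n x ≤ ε n := fun n x => mul_le_of_le_one_right (hε n).le (ψ n x).2.2
  have hterm0 : ∀ n x, 0 ≤ a n x / 2 / 2 ^ n := fun n x => by have := ha0 n x; positivity
  have hterm1 : ∀ n x, a n x / 2 / 2 ^ n ≤ 1 / 2 / 2 ^ n := fun n x => by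
    gcongr; exact (ha1 n x).trans (hε1 n)
  have hcont : Continuous fun x => ∑' n, a n x / 2 / 2 ^ n :=
    continuous_tsum (fun n => by fun_prop) (summable_geometric_two' 1) fun n x => by
      rw [Real.norm_of_nonneg (hterm0 n x)]; exact hterm1 n x
  let f : C(X, ℝ) := ⟨_, hcont⟩
  have hf0 : ∀ x, (∀ n, a n x = 0) → f x = 0 := fun x h => by simp [f, h]
  have hψpos : ∀ n x, 0 < a n x → 0 < (ψ n x : ℝ) := fun n x h => pos_of_mul_pos_right h (hε n).le
  refine ⟨f, ?_, fun z hz => hf0 z fun n => (ha0 n z).eq_or_lt.elim Eq.symm fun h =>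
    absurd hz ((hψW n z (hψpos n z h)).1), fun i hpi => ?_⟩
  · rintro ⟨x, y⟩ (rfl : y = f x)
    by_cases h : ∃ j, 0 < a j x
    · obtain ⟨j, hj⟩ := h
      obtain ⟨i, hi, hle⟩ := exists_tsum_div_two_pow_le (ha0 · x) hj
      have hf : 0 ≤ f x := tsum_nonneg (hterm0 · x)
      exact (hψW i x (hψpos i x hi)).2 _ (abs_le.2 ⟨by linarith [hε i], hle.trans (ha1 i x)⟩)
    · push Not at h
      simpa [hf0 x fun n => le_antisymm (h n) (ha0 n x)] using hW0 x
  · have hsum : Summable fun n => a n (p i) / 2 / 2 ^ n :=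
      (summable_geometric_two' 1).of_nonneg_of_le (hterm0 · (p i)) (hterm1 · (p i))
    refine (hsum.tsum_pos (hterm0 · (p i)) i ?_).ne'
    simp only [a, hψp i hpi, Set.Icc.coe_one, mul_one]
    have := hε i
    positivity

theorem not_sequentialSpace_cxVietoris [T1Space X] [CompletelyRegularSpace X]
    (hX : ¬CountablyCompact X) : ¬@SequentialSpace C(X, ℝ) (cxVietoris X) := by
  let _ := cxVietoris X
  intro _
  obtain ⟨p, hp⟩ := exists_locallyFinite_of_not_countablyCompact hX
  set A : Set C(X, ℝ) := {f | {i | f (p i) ≠ 0}.Infinite}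
  have hA : IsClosed A := IsSeqClosed.isClosed fun f g hfA hfg => by
    obtain ⟨k, hk⟩ := exists_eq_of_tendsto_cxVietoris hp hfg
    exact ((hfA k).sdiff (finite_lt_nat k)).mono fun i hi h =>
      hi.1 ((hk i (not_lt.1 hi.2)).trans h)
  have h0 : (0 : C(X, ℝ)) ∈ closure A := mem_closure_iff_nhds.2 fun U hU => by
    obtain ⟨W, hW, hW0, Z, hZ, hsub⟩ := exists_subset_of_mem_nhds_cxVietoris hU
    obtain ⟨f, hfW, hfZ, hfp⟩ := exists_graphOf_subset_eqOn_zero hW (fun x => hW0 rfl) hZ.isClosed p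
    refine ⟨f, hsub ⟨hfW, hfZ⟩, (hp.finite_nonempty_inter_compact hZ.isCompact).infinite_compl.mono
      fun i (hi : ¬({p i} ∩ Z).Nonempty) => hfp i fun hpi => hi ⟨p i, rfl, hpi⟩⟩
  simpa [A] using hA.closure_subset h0

end

/-- For a Tychonoff space `X`, the following are equivalent: `(C(X), τ_V)` is
metrizable; first countable; Fréchet–Urysohn; sequential; `X` is countably compact;
`τ_V = τ_U` on `C(X)`. -/
theorem cxVietoris_tfae {X : Type*} [TopologicalSpace X] [T2Space X]
    [CompletelyRegularSpace X] :
    List.TFAE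
      [@MetrizableSpace C(X, ℝ) (cxVietoris X),
       @FirstCountableTopology C(X, ℝ) (cxVietoris X),
       @FrechetUrysohnSpace C(X, ℝ) (cxVietoris X),
       @SequentialSpace C(X, ℝ) (cxVietoris X),
       CountablyCompact X,
       cxVietoris X = cxUniform X] := by
  let _ := cxVietoris X
  tfae_have 1 → 2 := fun _ => inferInstance
  tfae_have 2 → 3 := fun _ => inferInstance
  tfae_have 3 → 4 := fun _ => inferInstance
  tfae_have 4 → 5 := fun h => by_contra fun hX => not_sequentialSpace_cxVietoris hX h
  tfae_have 5 → 6 := fun h => le_antisymm cxVietoris_le_cxUniform (cxUniform_le_cxVietoris h)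
  tfae_have 6 → 1 := fun h => h ▸ metrizableSpace_cxUniform
  tfae_finish
end

section
/- Let X be a Tychonoff (completely regular Hausdorff) space. The following are equivalent: (1) C(X) with the Vietoris topology τ_V is second countable; (2) (C(X), τ_V) is separable; (3) (C(X), τ_V) satisfies the countable chain condition (every pairwise disjoint family of nonempty open sets is countable); (4) (C(X), τ_V) is Lindelöf; (5) X is compact and metrizable. -/
open Set Topology TopologicalSpace

/-- A topology satisfies the countable chain condition if every pairwise disjoint
family of nonempty open sets is countable. -/
def HasCCC {Y : Type*} (t : TopologicalSpace Y) : Prop :=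
  ∀ 𝒞 : Set (Set Y), (∀ U ∈ 𝒞, IsOpen[t] U ∧ U.Nonempty) → 𝒞.PairwiseDisjoint id →
    𝒞.Countable

/-!
Uniform balls `{g | ∀ x, |g x - f x| < ε}` are Vietoris-open: each is `W⁺` for an open tube `W`
around the graph of `f`. Hence ccc and Lindelöf both force every uniformly `ε`-separated family in
`C(X)` to be countable. A maximal such family is an `ε`-net, so `C(X)` has a countable uniformly
dense subset `D`; for Tychonoff `X` the evaluation map `X → ℝ^D` is then an embedding, so `X` is
second countable and metrizable. If some `f` were unbounded, the multiples `c • f` (`c ∈ ℝ`)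
would form an uncountable `1`-separated family; so every continuous function on `X` is bounded,
which in a normal space forces countable compactness (Tietze), hence compactness.

Conversely, for compact second countable `X` all graphs are compact, so `W⁺` is the union of the
sets `(⋃₀ s)⁺` with `s` a finite family of basic open sets inside `W`, and these sets together
with the `B⁻`, `B` basic, form a countable subbasis.
-/

theorem HasCCC.countable_of_pairwiseDisjoint {Y ι : Type*} {t : TopologicalSpace Y}
    (h : HasCCC t) {s : ι → Set Y} {a : Set ι} (hd : a.PairwiseDisjoint s)
    (ho : ∀ i ∈ a, IsOpen[t] (s i)) (hne : ∀ i ∈ a, (s i).Nonempty) : a.Countable := by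
  have hinj : InjOn s a := fun i hi j hj hij => by
    by_contra hij'
    have hdisj := hd hi hj hij'
    rw [Function.onFun, hij, disjoint_self] at hdisj
    exact (hne j hj).ne_empty hdisj
  refine (mapsTo_image s a).countable_of_injOn hinj (h _ ?_ ?_)
  · rintro _ ⟨i, hi, rfl⟩
    exact ⟨ho i hi, hne i hi⟩
  · rintro _ ⟨i, hi, rfl⟩ _ ⟨j, hj, rfl⟩ hij
    exact hd hi hj fun hij' => hij (hij' ▸ rfl)

theorem hasCCC_of_separableSpace {Y : Type*} [TopologicalSpace Y] [SeparableSpace Y] :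
    HasCCC ‹TopologicalSpace Y› := fun _ h hd =>
  hd.countable_of_isOpen (fun U hU => (h U hU).1) fun U hU => (h U hU).2

theorem LindelofSpace.countable_of_subsingleton_inter {Y : Type*} [TopologicalSpace Y]
    [LindelofSpace Y] (U : Y → Set Y) (hU : ∀ y, U y ∈ 𝓝 y) {a : Set Y}
    (ha : ∀ y, (U y ∩ a).Subsingleton) : a.Countable := by
  obtain ⟨t, htc, -, hcover⟩ := isLindelof_univ.elim_nhds_subcover U fun y _ => hU y
  refine ((htc.biUnion fun y _ => (ha y).countable)).mono fun z hz => ?_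
  obtain ⟨y, hy, hzy⟩ := mem_iUnion₂.mp (hcover (mem_univ z))
  exact mem_iUnion₂.mpr ⟨y, hy, hzy, hz⟩

section Graph

variable {X : Type*}

theorem graphOf_eq_range (f : X → ℝ) : graphOf f = range fun x => (x, f x) := by
  ext ⟨x, y⟩
  simp [graphOf, eq_comm]

theorem graphOf_subset_iff {f : X → ℝ} {W : Set (X × ℝ)} :
    graphOf f ⊆ W ↔ ∀ x, (x, f x) ∈ W := by
  rw [graphOf_eq_range, range_subset_iff]

end Graph

section Vietoris

variable {X : Type*} [TopologicalSpace X]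

-- The subbasic sets `W⁺` and `W⁻` of `cxVietoris X`.
def cxPlus (W : Set (X × ℝ)) : Set C(X, ℝ) := {f | graphOf ⇑f ⊆ W}

def cxMinus (W : Set (X × ℝ)) : Set C(X, ℝ) := {f | (graphOf ⇑f ∩ W).Nonempty}

theorem isOpen_cxPlus {W : Set (X × ℝ)} (hW : IsOpen W) : IsOpen[cxVietoris X] (cxPlus W) :=
  .basic _ (.inl ⟨W, hW, rfl⟩)

theorem isOpen_cxMinus {W : Set (X × ℝ)} (hW : IsOpen W) : IsOpen[cxVietoris X] (cxMinus W) :=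
  .basic _ (.inr ⟨W, hW, rfl⟩)

theorem cxMinus_sUnion (𝒲 : Set (Set (X × ℝ))) : cxMinus (⋃₀ 𝒲) = ⋃ W ∈ 𝒲, cxMinus W := by
  ext f
  simp only [cxMinus, sUnion_eq_biUnion, inter_iUnion₂, nonempty_iUnion, mem_iUnion, exists_prop,
    mem_ofPred_eq]

def uniformBall (f : C(X, ℝ)) (ε : ℝ) : Set C(X, ℝ) := {g | ∀ x, dist (g x) (f x) < ε}

theorem mem_uniformBall_self (f : C(X, ℝ)) {ε : ℝ} (hε : 0 < ε) : f ∈ uniformBall f ε :=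
  fun x => by simpa using hε

theorem mem_uniformBall_comm {f g : C(X, ℝ)} {ε : ℝ} :
    g ∈ uniformBall f ε ↔ f ∈ uniformBall g ε := by
  simp only [uniformBall, mem_ofPred_eq, dist_comm]

theorem isOpen_uniformBall (f : C(X, ℝ)) (ε : ℝ) : IsOpen[cxVietoris X] (uniformBall f ε) := by
  have hW : IsOpen {p : X × ℝ | dist p.2 (f p.1) < ε} := isOpen_lt (by fun_prop) continuous_const
  convert isOpen_cxPlus hW using 1
  ext g
  simp only [cxPlus, graphOf_subset_iff]
  rfl

def UniformlySeparated (ε : ℝ) (A : Set C(X, ℝ)) : Prop :=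
  A.Pairwise fun f g => ∃ x, ε ≤ dist (f x) (g x)

theorem UniformlySeparated.eq_of_mem_uniformBall {ε : ℝ} {A : Set C(X, ℝ)}
    (hA : UniformlySeparated ε A) {f g k : C(X, ℝ)} (hfA : f ∈ A) (hgA : g ∈ A)
    (hf : f ∈ uniformBall k (ε / 2)) (hg : g ∈ uniformBall k (ε / 2)) : f = g := by
  by_contra hfg
  obtain ⟨x, hx⟩ := hA hfA hgA hfg
  linarith [dist_triangle_right (f x) (g x) (k x), hf x, hg x]

theorem UniformlySeparated.countable_of_hasCCC (h : HasCCC (cxVietoris X)) {ε : ℝ}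
    (hε : 0 < ε) {A : Set C(X, ℝ)} (hA : UniformlySeparated ε A) : A.Countable :=
  HasCCC.countable_of_pairwiseDisjoint h
    (fun _ hf _ hg hfg => disjoint_left.2 fun _ hkf hkg =>
      hfg <| hA.eq_of_mem_uniformBall hf hg (mem_uniformBall_comm.1 hkf)
        (mem_uniformBall_comm.1 hkg))
    (fun f _ => isOpen_uniformBall f (ε / 2))
    (fun f _ => ⟨f, mem_uniformBall_self f (half_pos hε)⟩)

theorem UniformlySeparated.countable_of_lindelofSpace (h : @LindelofSpace _ (cxVietoris X))
    {ε : ℝ} (hε : 0 < ε) {A : Set C(X, ℝ)} (hA : UniformlySeparated ε A) : A.Countable :=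
  letI := cxVietoris X
  LindelofSpace.countable_of_subsingleton_inter (fun k => uniformBall k (ε / 2))
    (fun k => (isOpen_uniformBall k _).mem_nhds (mem_uniformBall_self k (half_pos hε)))
    fun _ _ hf _ hg => hA.eq_of_mem_uniformBall hf.2 hg.2 hf.1 hg.1

end Vietoris

def UniformlySeparatedSetsCountable (X : Type*) [TopologicalSpace X] : Prop :=
  ∀ ε > 0, ∀ A : Set C(X, ℝ), UniformlySeparated ε A → A.Countable

namespace UniformlySeparatedSetsCountable

variable {X : Type*} [TopologicalSpace X]

theorem exists_countable_uniformNet (h : UniformlySeparatedSetsCountable X) {ε : ℝ} (hε : 0 < ε) :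
    ∃ D : Set C(X, ℝ), D.Countable ∧ ∀ f, ∃ g ∈ D, f ∈ uniformBall g ε := by
  obtain ⟨A, hA⟩ := zorn_subset {A : Set C(X, ℝ) | UniformlySeparated ε A} fun c hc hchain =>
    ⟨⋃₀ c, hchain.pairwise_sUnion.2 hc, fun _ => subset_sUnion_of_mem⟩
  refine ⟨A, h ε hε A hA.prop, fun f => ?_⟩
  by_contra! hfar
  have hsep : UniformlySeparated ε (insert f A) := hA.prop.insert fun g hg _ => by
    obtain ⟨x, hx⟩ : ∃ x, ε ≤ dist (f x) (g x) := by simpa [uniformBall] using hfar g hg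
    exact ⟨⟨x, hx⟩, ⟨x, dist_comm (f x) (g x) ▸ hx⟩⟩
  exact hfar f (hA.eq_of_subset hsep (subset_insert f A) ▸ mem_insert f A)
    (mem_uniformBall_self f hε)

theorem exists_countable_uniformlyDense (h : UniformlySeparatedSetsCountable X) :
    ∃ D : Set C(X, ℝ), D.Countable ∧ ∀ f, ∀ ε > 0, ∃ g ∈ D, f ∈ uniformBall g ε := by
  choose D hDc hD using fun n : ℕ => h.exists_countable_uniformNet (Nat.one_div_pos_of_nat (n := n))
  refine ⟨⋃ n, D n, countable_iUnion hDc, fun f ε hε => ?_⟩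
  obtain ⟨n, hn⟩ := exists_nat_one_div_lt hε
  obtain ⟨g, hg, hfg⟩ := hD n f
  exact ⟨g, mem_iUnion.2 ⟨n, hg⟩, fun x => (hfg x).trans hn⟩

theorem exists_abs_le (h : UniformlySeparatedSetsCountable X) (f : C(X, ℝ)) :
    ∃ M, ∀ x, |f x| ≤ M := by
  by_contra! hf
  have hsep : ∀ c c' : ℝ, c ≠ c' → ∃ x, 1 ≤ dist ((c • f) x) ((c' • f) x) := fun c c' hc => by
    have hpos : 0 < |c - c'| := abs_pos.2 (sub_ne_zero.2 hc)
    obtain ⟨x, hx⟩ := hf (1 / |c - c'|)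
    rw [div_lt_iff₀ hpos] at hx
    refine ⟨x, ?_⟩
    rw [ContinuousMap.smul_apply, ContinuousMap.smul_apply, smul_eq_mul, smul_eq_mul, Real.dist_eq,
      ← sub_mul, abs_mul]
    linarith
  have hinj : Function.Injective fun c : ℝ => c • f := fun c c' hcc => by
    by_contra hc
    obtain ⟨x, hx⟩ := hsep c c' hc
    simp only [hcc, dist_self] at hx
    linarith
  have hcount := h 1 one_pos (range fun c : ℝ => c • f) <| by
    rintro _ ⟨c, rfl⟩ _ ⟨c', rfl⟩ hne
    exact hsep c c' fun hc => hne (hc ▸ rfl)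
  exact Cardinal.not_countable_real (by simpa using hcount.preimage hinj)

end UniformlySeparatedSetsCountable

theorem secondCountableTopology_of_countable_uniformlyDense {X : Type*} [TopologicalSpace X]
    [CompletelyRegularSpace X] {D : Set C(X, ℝ)} (hD : D.Countable)
    (hdense : ∀ f, ∀ ε > 0, ∃ g ∈ D, f ∈ uniformBall g ε) : SecondCountableTopology X := by
  have := hD.to_subtype
  let e : X → D → ℝ := fun x g => (g : C(X, ℝ)) x
  have he : Continuous e := continuous_pi fun g => (g : C(X, ℝ)).continuous
  refine IsInducing.secondCountableTopology (f := e) <| isInducing_iff_nhds.2 fun x =>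
    le_antisymm (he.tendsto x).le_comap <| (nhds_basis_opens x).ge_iff.2 ?_
  rintro U ⟨hxU, hU⟩
  obtain ⟨φ, hφ, hφx, hφU⟩ := CompletelyRegularSpace.completely_regular_isOpen x U hU hxU
  obtain ⟨g, hgD, hφg⟩ := hdense ⟨fun y => φ y, continuous_subtype_val.comp hφ⟩ (1 / 2) one_half_pos
  refine Filter.mem_comap.2 ⟨{v | v ⟨g, hgD⟩ < 1 / 2},
    (isOpen_lt (continuous_apply _) continuous_const).mem_nhds ?_, fun y hy => ?_⟩
  · show g x < 1 / 2
    have := hφg x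
    simp only [hφx, ContinuousMap.coe_mk, Set.Icc.coe_zero, Real.dist_eq] at this
    linarith [abs_lt.1 this]
  · by_contra hyU
    have := hφg y
    simp only [hφU hyU, ContinuousMap.coe_mk, Pi.one_apply, Set.Icc.coe_one, Real.dist_eq] at this
    have hy : g y < 1 / 2 := hy
    linarith [abs_lt.1 this]

theorem countablyCompactSpace_of_forall_abs_le {X : Type*} [TopologicalSpace X] [NormalSpace X]
    [T1Space X] (hb : ∀ f : C(X, ℝ), ∃ M, ∀ x, |f x| ≤ M) : CountablyCompactSpace X := by
  by_contra hX
  rw [← isCountablyCompact_univ_iff, isCountablyCompact_iff_infinite_subset_has_accPt] at hX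
  push Not at hX
  obtain ⟨B, -, hBinf, hB⟩ := hX
  have hBclosed : IsClosed B := isClosed_iff_accPt.2 fun a ha => absurd ha (hB a trivial)
  have : DiscreteTopology B := discreteTopology_of_noAccPts fun a _ => hB a trivial
  have : Infinite B := hBinf.to_subtype
  let e := Infinite.natEmbedding B
  obtain ⟨f, hf⟩ := ContinuousMap.exists_restrict_eq hBclosed
    ⟨Function.extend e (fun n => (n : ℝ)) 0, continuous_of_discreteTopology⟩
  have hfe : ∀ n, f (e n) = n := fun n => by
    simpa [e.injective.extend_apply] using DFunLike.congr_fun hf (e n)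
  obtain ⟨M, hM⟩ := hb f
  obtain ⟨n, hn⟩ := exists_nat_gt M
  linarith [hM (e n), le_abs_self (f (e n)), hfe n]

theorem UniformlySeparatedSetsCountable.compactSpace_and_metrizableSpace {X : Type*}
    [TopologicalSpace X] [T2Space X] [CompletelyRegularSpace X]
    (h : UniformlySeparatedSetsCountable X) : CompactSpace X ∧ MetrizableSpace X := by
  obtain ⟨D, hD, hdense⟩ := h.exists_countable_uniformlyDense
  have := secondCountableTopology_of_countable_uniformlyDense hD hdense
  have := countablyCompactSpace_of_forall_abs_le h.exists_abs_le
  exact ⟨LindelofSpace.compactSpace, metrizableSpace_of_t3_secondCountable X⟩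

theorem TopologicalSpace.IsTopologicalBasis.exists_finite_subset_of_isCompact {Y : Type*}
    [TopologicalSpace Y] {ℬ : Set (Set Y)} (hℬ : IsTopologicalBasis ℬ) {K W : Set Y}
    (hK : IsCompact K) (hW : IsOpen W) (hKW : K ⊆ W) :
    ∃ s ⊆ ℬ, s.Finite ∧ K ⊆ ⋃₀ s ∧ ⋃₀ s ⊆ W := by
  have hcover : K ⊆ ⋃ B ∈ {B ∈ ℬ | B ⊆ W}, id B := by
    simpa only [id, ← sUnion_eq_biUnion, ← hℬ.open_eq_sUnion' hW] using hKW
  obtain ⟨s, hs, hsfin, hKs⟩ := hK.elim_finite_subcover_image (fun B hB => hℬ.isOpen hB.1) hcover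
  exact ⟨s, fun B hB => (hs hB).1, hsfin, by rwa [sUnion_eq_biUnion],
    sUnion_subset fun B hB => (hs hB).2⟩

section CompactDomain

variable {X : Type*} [TopologicalSpace X] [CompactSpace X]

theorem isCompact_graphOf (f : C(X, ℝ)) : IsCompact (graphOf ⇑f) :=
  graphOf_eq_range f ▸ isCompact_range (by fun_prop)

theorem cxPlus_eq_biUnion {ℬ : Set (Set (X × ℝ))} (hℬ : IsTopologicalBasis ℬ)
    {W : Set (X × ℝ)} (hW : IsOpen W) :
    cxPlus W = ⋃ s ∈ {s | (s.Finite ∧ s ⊆ ℬ) ∧ ⋃₀ s ⊆ W}, cxPlus (⋃₀ s) := by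
  ext f
  simp only [mem_iUnion₂, exists_prop]
  constructor
  · intro hf
    obtain ⟨s, hsℬ, hsfin, hfs, hsW⟩ :=
      hℬ.exists_finite_subset_of_isCompact (isCompact_graphOf f) hW hf
    exact ⟨s, ⟨⟨hsfin, hsℬ⟩, hsW⟩, hfs⟩
  · rintro ⟨s, ⟨-, hsW⟩, hfs⟩
    exact hfs.trans hsW

theorem secondCountableTopology_cxVietoris [SecondCountableTopology X] :
    @SecondCountableTopology C(X, ℝ) (cxVietoris X) := by
  obtain ⟨ℬ, hℬc, -, hℬ⟩ := exists_countable_basis (X × ℝ)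
  let 𝒮 := (fun s => cxPlus (⋃₀ s)) '' {s | s.Finite ∧ s ⊆ ℬ} ∪ cxMinus '' ℬ
  have h𝒮 : 𝒮.Countable := ((countable_ofPred_finite_subset hℬc).image _).union (hℬc.image _)
  refine @SecondCountableTopology.mk _ (cxVietoris X) ⟨𝒮, h𝒮, le_antisymm ?_ ?_⟩
  · refine le_generateFrom ?_
    rintro _ (⟨s, ⟨-, hsℬ⟩, rfl⟩ | ⟨B, hB, rfl⟩)
    · exact isOpen_cxPlus (isOpen_sUnion fun B hB => hℬ.isOpen (hsℬ hB))
    · exact isOpen_cxMinus (hℬ.isOpen hB)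
  · refine le_generateFrom ?_
    rintro _ (⟨W, hW, rfl⟩ | ⟨W, hW, rfl⟩)
    · change IsOpen[generateFrom 𝒮] (cxPlus W)
      rw [cxPlus_eq_biUnion hℬ hW]
      exact @isOpen_biUnion _ _ (generateFrom 𝒮) _ _
        fun s hs => .basic _ (.inl ⟨s, hs.1, rfl⟩)
    · change IsOpen[generateFrom 𝒮] (cxMinus W)
      rw [hℬ.open_eq_sUnion' hW, cxMinus_sUnion]
      exact @isOpen_biUnion _ _ (generateFrom 𝒮) _ _
        fun B hB => .basic _ (.inr ⟨B, hB.1, rfl⟩)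

end CompactDomain

/-- For a Tychonoff space `X`, the following are equivalent: `(C(X), τ_V)` is second
countable; separable; ccc; Lindelöf; `X` is compact and metrizable. -/
theorem cxVietoris_countability_tfae {X : Type*} [TopologicalSpace X] [T2Space X]
    [CompletelyRegularSpace X] :
    List.TFAE
      [@SecondCountableTopology C(X, ℝ) (cxVietoris X),
       @SeparableSpace C(X, ℝ) (cxVietoris X),
       HasCCC (cxVietoris X),
       @LindelofSpace C(X, ℝ) (cxVietoris X),
       CompactSpace X ∧ MetrizableSpace X] := by
  tfae_have 1 → 2 := fun h => @SecondCountableTopology.to_separableSpace _ (cxVietoris X) h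
  tfae_have 1 → 4 := fun h => @HereditarilyLindelof.to_Lindelof _ (cxVietoris X)
    (@SecondCountableTopology.toHereditarilyLindelof _ (cxVietoris X) h)
  tfae_have 2 → 3 := fun h => @hasCCC_of_separableSpace _ (cxVietoris X) h
  tfae_have 3 → 5 := fun h => UniformlySeparatedSetsCountable.compactSpace_and_metrizableSpace
    fun _ hε _ hA => hA.countable_of_hasCCC h hε
  tfae_have 4 → 5 := fun h => UniformlySeparatedSetsCountable.compactSpace_and_metrizableSpace
    fun _ hε _ hA => hA.countable_of_lindelofSpace h hε
  tfae_have 5 → 1 := fun ⟨_, _⟩ =>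
    letI := metrizableSpaceMetric X
    secondCountableTopology_cxVietoris
  tfae_finish
end

section
/- Let X be a normal Hausdorff space. Then C(X), the set of graphs of continuous real-valued functions on X, is dense in L(X) with the upper Vietoris topology τ_V⁺; consequently C(X) is also dense in (L₀(X), τ_V⁺) and in (MC(X), τ_V⁺). -/
open Set Topology TopologicalSpace

/-!
A cusco map `F` has values `F x = [q x, p x]` with `q` lower and `p` upper semicontinuous. If
`F ⊆ W` with `W` open, then, after squashing `ℝ` onto `(-1, 1)` so that all infima and suprema
are finite, the infimum `a x` of the `c` with `{x} × [c, p x] ⊆ W` is upper semicontinuous and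
`a < q`, while the supremum `b x` of the `d` with `{x} × [q x, d] ⊆ W` is lower semicontinuous
and `p < b`. The Katětov–Tong insertion theorem, applied to `a ≤ q` and to `p ≤ b`, and averaging
give a continuous `f` with `a < f < b`, so the graph of `f` lies in `W`. As the sets
`{A | A ⊆ W}` form a base of the upper Vietoris topology, this is density.
-/

open Filter BoundedContinuousFunction

section Insertion

variable {X : Type*} [TopologicalSpace X] [NormalSpace X] {g h : X → ℝ}

lemma exists_bcf_approx_two_thirds (hg : UpperSemicontinuous g) (hh : LowerSemicontinuous h)
    (hgh : g ≤ h) (φ : X →ᵇ ℝ) {δ : ℝ} (hδ : 0 < δ)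
    (hφ : ∀ x, φ x ∈ Icc (g x - δ) (h x + δ)) :
    ∃ ψ : X →ᵇ ℝ, (∀ x, ψ x ∈ Icc (g x - 2 / 3 * δ) (h x + 2 / 3 * δ)) ∧
      dist ψ φ ≤ δ / 3 := by
  set A := {x | φ x + δ / 3 ≤ g x}
  set B := {x | h x ≤ φ x - δ / 3}
  have hA : IsClosed A := by
    convert (hg.add φ.continuous.neg.upperSemicontinuous).isClosed_preimage (δ / 3) using 1
    ext x; simp [A, add_comm]
  have hB : IsClosed B := by
    convert (hh.add φ.continuous.neg.lowerSemicontinuous).isClosed_preimage (-(δ / 3)) using 1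
    ext x; simp [B, le_sub_iff_add_le']
  have hAB : Disjoint B A := disjoint_left.2 fun x hB hA => by
    simp only [A, B, mem_ofPred_eq] at hA hB
    linarith [hgh x]
  obtain ⟨u, hu0, hu1, hu⟩ := exists_bounded_zero_one_of_closed hB hA hAB
  refine ⟨φ + (2 * δ / 3) • u - const X (δ / 3), fun x => ?_, ?_⟩
  · simp only [coe_sub, coe_add, coe_smul, Pi.add_apply, Pi.sub_apply, const_apply, smul_eq_mul]
    obtain ⟨hφg, hφh⟩ := hφ x
    obtain ⟨hu0', hu1'⟩ := hu x
    constructor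
    · by_cases hx : x ∈ A
      · rw [hu1 hx, Pi.one_apply]; linarith [hgh x, show φ x + δ / 3 ≤ g x from hx]
      · nlinarith [show g x < φ x + δ / 3 from not_le.1 hx]
    · by_cases hx : x ∈ B
      · rw [hu0 hx, Pi.zero_apply]; linarith [hgh x, show h x ≤ φ x - δ / 3 from hx]
      · nlinarith [show φ x - δ / 3 < h x from not_le.1 hx]
  · rw [dist_le (by positivity)]
    intro x
    simp only [coe_sub, coe_add, coe_smul, Pi.add_apply, Pi.sub_apply, const_apply, smul_eq_mul,
      Real.dist_eq, abs_le]
    obtain ⟨hu0', hu1'⟩ := hu x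
    constructor <;> nlinarith

theorem exists_continuous_mem_Icc_of_semicontinuous (hg : UpperSemicontinuous g)
    (hh : LowerSemicontinuous h) (hgh : g ≤ h) (hg1 : ∀ x, g x ≤ 1) (hh1 : ∀ x, -1 ≤ h x) :
    ∃ f : X → ℝ, Continuous f ∧ ∀ x, f x ∈ Icc (g x) (h x) := by
  let Approx (n : ℕ) := {φ : X →ᵇ ℝ // ∀ x, φ x ∈ Icc (g x - (2 / 3) ^ n) (h x + (2 / 3) ^ n)}
  have step (n : ℕ) (φ : Approx n) :
      ∃ ψ : Approx (n + 1), dist ψ.1 φ.1 ≤ 1 / 3 * (2 / 3) ^ n := by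
    obtain ⟨ψ, hψ, hdist⟩ := exists_bcf_approx_two_thirds hg hh hgh φ.1 (by positivity) φ.2
    exact ⟨⟨ψ, by simpa only [pow_succ, mul_comm] using hψ⟩, by linarith⟩
  choose next hnext using step
  let seq (n : ℕ) : Approx n :=
    Nat.rec ⟨0, fun x => ⟨by simpa using hg1 x, by simpa [neg_le_iff_add_nonneg] using hh1 x⟩⟩
      (fun n φ => next n φ) n
  have hseq (n : ℕ) : dist (seq n).1 (seq (n + 1)).1 ≤ 1 / 3 * (2 / 3) ^ n := by
    rw [dist_comm]; exact hnext n (seq n)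
  obtain ⟨F, hF⟩ :=
    cauchySeq_tendsto_of_complete (cauchySeq_of_le_geometric _ _ (by norm_num) hseq)
  have hclose (n : ℕ) (x : X) : |(seq n).1 x - F x| ≤ (2 / 3) ^ n :=
    calc |(seq n).1 x - F x| = dist ((seq n).1 x) (F x) := (Real.dist_eq _ _).symm
      _ ≤ dist (seq n).1 F := dist_coe_le_dist x
      _ ≤ 1 / 3 * (2 / 3) ^ n / (1 - 2 / 3) :=
        dist_le_of_le_geometric_of_tendsto _ _ (by norm_num) hseq hF n
      _ = (2 / 3) ^ n := by ring
  have hsmall : Tendsto (fun n : ℕ => 2 * (2 / 3 : ℝ) ^ n) atTop (𝓝 0) := by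
    simpa using (tendsto_pow_atTop_nhds_zero_of_lt_one (r := (2 / 3 : ℝ)) (by norm_num)
      (by norm_num)).const_mul 2
  refine ⟨F, F.continuous, fun x => ⟨?_, ?_⟩⟩
  · refine le_of_tendsto' (by simpa using (tendsto_const_nhds (x := g x)).sub hsmall)
      fun n => ?_
    linarith [((seq n).2 x).1, (abs_le.1 (hclose n x)).2]
  · refine ge_of_tendsto' (by simpa using (tendsto_const_nhds (x := h x)).add hsmall)
      fun n => ?_
    linarith [((seq n).2 x).2, (abs_le.1 (hclose n x)).1]

theorem exists_continuous_mem_Ioo_of_semicontinuous {a l u b : X → ℝ}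
    (ha : UpperSemicontinuous a) (hl : LowerSemicontinuous l) (hu : UpperSemicontinuous u)
    (hb : LowerSemicontinuous b) (hal : ∀ x, a x < l x) (hlu : l ≤ u) (hub : ∀ x, u x < b x)
    (ha1 : ∀ x, -1 ≤ a x) (hb1 : ∀ x, b x ≤ 1) :
    ∃ f : X → ℝ, Continuous f ∧ ∀ x, f x ∈ Ioo (a x) (b x) := by
  obtain ⟨f₁, hf₁, hf₁al⟩ := exists_continuous_mem_Icc_of_semicontinuous ha hl
    (fun x => (hal x).le) (fun x => by linarith [hal x, hlu x, hub x, hb1 x])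
    (fun x => by linarith [hal x, ha1 x])
  obtain ⟨f₂, hf₂, hf₂ub⟩ := exists_continuous_mem_Icc_of_semicontinuous hu hb
    (fun x => (hub x).le) (fun x => by linarith [hub x, hb1 x])
    (fun x => by linarith [hal x, hlu x, hub x, ha1 x])
  refine ⟨fun x => (f₁ x + f₂ x) / 2, (hf₁.add hf₂).div_const 2, fun x => ⟨?_, ?_⟩⟩
  · linarith [(hf₁al x).1, (hf₂ub x).1, hal x, hlu x]
  · linarith [(hf₁al x).2, (hf₂ub x).2, hub x, hlu x]

end Insertion

noncomputable def squash (y : ℝ) : ℝ := orderIsoIooNegOneOne ℝ y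

lemma squash_strictMono : StrictMono squash := fun _ _ h =>
  Subtype.coe_lt_coe.2 ((orderIsoIooNegOneOne ℝ).strictMono h)

lemma continuous_squash : Continuous squash :=
  continuous_subtype_val.comp (orderIsoIooNegOneOne ℝ).continuous

lemma squash_mem_Ioo (y : ℝ) : squash y ∈ Ioo (-1) 1 := (orderIsoIooNegOneOne ℝ y).2

lemma Continuous.exists_squash_comp_eq {X : Type*} [TopologicalSpace X] {g : X → ℝ}
    (hg : Continuous g) (hg1 : ∀ x, g x ∈ Ioo (-1) 1) :
    ∃ f : X → ℝ, Continuous f ∧ ∀ x, squash (f x) = g x :=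
  ⟨fun x => (orderIsoIooNegOneOne ℝ).symm ⟨g x, hg1 x⟩,
    (orderIsoIooNegOneOne ℝ).symm.continuous.comp (hg.subtype_mk hg1),
    fun x => by simp [squash]⟩

namespace IsCusco

variable {X : Type*} [TopologicalSpace X] {F : Set (X × ℝ)}

lemma valuesAt_eq_Icc (hF : IsCusco F) (x : X) :
    valuesAt F x = Icc (sInf (valuesAt F x)) (sSup (valuesAt F x)) :=
  eq_Icc_of_connected_compact ((hF.2 x).2.2.isConnected (hF.2 x).1) (hF.2 x).2.1

lemma sInf_le_sSup (hF : IsCusco F) (x : X) : sInf (valuesAt F x) ≤ sSup (valuesAt F x) :=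
  csInf_le_csSup (hF.2 x).1 (hF.2 x).2.1.bddBelow (hF.2 x).2.1.bddAbove

lemma lowerSemicontinuous_sInf (hF : IsCusco F) :
    LowerSemicontinuous fun x => sInf (valuesAt F x) := by
  intro x y hy
  obtain ⟨U, hU, hxU, hUy⟩ := hF.1 x (Ioi y) isOpen_Ioi fun z hz =>
    hy.trans_le (csInf_le (hF.2 x).2.1.bddBelow hz)
  filter_upwards [hU.mem_nhds hxU] with u hu
  exact hUy u hu ((hF.2 u).2.1.sInf_mem (hF.2 u).1)

lemma upperSemicontinuous_sSup (hF : IsCusco F) :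
    UpperSemicontinuous fun x => sSup (valuesAt F x) := by
  intro x y hy
  obtain ⟨U, hU, hxU, hUy⟩ := hF.1 x (Iio y) isOpen_Iio fun z hz =>
    (le_csSup (hF.2 x).2.1.bddAbove hz).trans_lt hy
  filter_upwards [hU.mem_nhds hxU] with u hu
  exact hUy u hu ((hF.2 u).2.1.sSup_mem (hF.2 u).1)

end IsCusco

section Slices

variable {X : Type*} [TopologicalSpace X] {W : Set (X × ℝ)}

lemma IsOpen.exists_eventually_Ioo_subset_slice (hW : IsOpen W) {x : X} {c d : ℝ} (hcd : c ≤ d)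
    (h : Icc c d ⊆ Prod.mk x ⁻¹' W) :
    ∃ l < c, ∃ r > d, ∀ᶠ u in 𝓝 x, Ioo l r ⊆ Prod.mk u ⁻¹' W := by
  obtain ⟨U, V, hU, hV, hxU, hcdV, hUV⟩ := generalized_tube_lemma isCompact_singleton
    isCompact_Icc hW (by rintro ⟨_, y⟩ ⟨rfl, hy⟩; exact h hy)
  obtain ⟨l, hl, hlV⟩ := exists_Ioc_subset_of_mem_nhds (hV.mem_nhds (hcdV ⟨le_rfl, hcd⟩))
    ⟨c - 1, by linarith⟩
  obtain ⟨r, hr, hrV⟩ := exists_Ico_subset_of_mem_nhds (hV.mem_nhds (hcdV ⟨hcd, le_rfl⟩))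
    ⟨d + 1, by linarith⟩
  refine ⟨l, hl, r, hr, ?_⟩
  filter_upwards [hU.mem_nhds (hxU rfl)] with u hu y hy
  refine hUV ⟨hu, ?_⟩
  rcases le_or_gt y c with hyc | hcy
  · exact hlV ⟨hy.1, hyc⟩
  rcases le_or_gt y d with hyd | hdy
  · exact hcdV ⟨hcy.le, hyd⟩
  · exact hrV ⟨hdy.le, hy.2⟩

lemma IsOpen.eventually_Icc_subset_slice_of_upperSemicontinuous (hW : IsOpen W) {s : X → ℝ}
    (hs : UpperSemicontinuous s) {x : X} {c : ℝ} (h : Icc c (s x) ⊆ Prod.mk x ⁻¹' W) :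
    ∀ᶠ u in 𝓝 x, Icc c (s u) ⊆ Prod.mk u ⁻¹' W := by
  rcases lt_or_ge (s x) c with hsc | hcs
  · filter_upwards [hs x c hsc] with u hu
    simp [Icc_eq_empty hu.not_ge]
  obtain ⟨l, hl, r, hr, hlr⟩ := hW.exists_eventually_Ioo_subset_slice hcs h
  filter_upwards [hlr, hs x r hr] with u hu hsu
  exact (Icc_subset_Ioo hl hsu).trans hu

lemma IsOpen.eventually_Icc_subset_slice_of_lowerSemicontinuous (hW : IsOpen W) {t : X → ℝ}
    (ht : LowerSemicontinuous t) {x : X} {d : ℝ} (h : Icc (t x) d ⊆ Prod.mk x ⁻¹' W) :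
    ∀ᶠ u in 𝓝 x, Icc (t u) d ⊆ Prod.mk u ⁻¹' W := by
  rcases lt_or_ge d (t x) with hdt | htd
  · filter_upwards [ht x d hdt] with u hu
    simp [Icc_eq_empty hu.not_ge]
  obtain ⟨l, hl, r, hr, hlr⟩ := hW.exists_eventually_Ioo_subset_slice htd h
  filter_upwards [hlr, ht x l hl] with u hu htu
  exact (Icc_subset_Ioo htu hr).trans hu

variable {t s : X → ℝ}

lemma IsOpen.exists_lt_Icc_subset_slice (hW : IsOpen W) (hts : t ≤ s)
    (hsub : ∀ x, Icc (t x) (s x) ⊆ Prod.mk x ⁻¹' W) (x : X) :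
    ∃ c < t x, ∃ d > s x, Icc c d ⊆ Prod.mk x ⁻¹' W := by
  obtain ⟨l, hl, r, hr, hlr⟩ := hW.exists_eventually_Ioo_subset_slice (hts x) (hsub x)
  obtain ⟨c, hlc, hct⟩ := exists_between hl
  obtain ⟨d, hsd, hdr⟩ := exists_between hr
  exact ⟨c, hct, d, hsd, (Icc_subset_Ioo hlc hdr).trans hlr.self_of_nhds⟩

lemma IsOpen.exists_upperSemicontinuous_lower_margin (hW : IsOpen W)
    (hs : UpperSemicontinuous s) (hts : t ≤ s)
    (hsub : ∀ x, Icc (t x) (s x) ⊆ Prod.mk x ⁻¹' W) :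
    ∃ a : X → ℝ, UpperSemicontinuous a ∧ ∀ x, -1 ≤ a x ∧ a x < squash (t x) ∧
      ∀ y ≤ s x, a x < squash y → (x, y) ∈ W := by
  let C (x : X) : Set ℝ := squash '' {c | Icc c (s x) ⊆ Prod.mk x ⁻¹' W}
  have hbdd (x : X) : BddBelow (C x) :=
    ⟨-1, forall_mem_image.2 fun c _ => (squash_mem_Ioo c).1.le⟩
  have hlt (x : X) : ∃ c, Icc c (s x) ⊆ Prod.mk x ⁻¹' W ∧ c < t x := by
    obtain ⟨c, hct, d, hsd, hcd⟩ := hW.exists_lt_Icc_subset_slice hts hsub x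
    exact ⟨c, (Icc_subset_Icc_right hsd.le).trans hcd, hct⟩
  have hne (x : X) : (C x).Nonempty := let ⟨c, hc, _⟩ := hlt x; ⟨_, mem_image_of_mem _ hc⟩
  refine ⟨fun x => sInf (C x), fun x y hy => ?_, fun x => ⟨?_, ?_, fun y hys hy => ?_⟩⟩
  · obtain ⟨_, ⟨c, hc, rfl⟩, hcy⟩ := exists_lt_of_csInf_lt (hne x) hy
    filter_upwards [hW.eventually_Icc_subset_slice_of_upperSemicontinuous hs hc] with u hu
    exact (csInf_le (hbdd u) (mem_image_of_mem _ hu)).trans_lt hcy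
  · exact le_csInf (hne x) (forall_mem_image.2 fun c _ => (squash_mem_Ioo c).1.le)
  · obtain ⟨c, hc, hct⟩ := hlt x
    exact (csInf_le (hbdd x) (mem_image_of_mem _ hc)).trans_lt (squash_strictMono hct)
  · obtain ⟨_, ⟨c, hc, rfl⟩, hcy⟩ := exists_lt_of_csInf_lt (hne x) hy
    exact hc ⟨(squash_strictMono.lt_iff_lt.1 hcy).le, hys⟩

lemma IsOpen.exists_lowerSemicontinuous_upper_margin (hW : IsOpen W)
    (ht : LowerSemicontinuous t) (hts : t ≤ s)
    (hsub : ∀ x, Icc (t x) (s x) ⊆ Prod.mk x ⁻¹' W) :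
    ∃ b : X → ℝ, LowerSemicontinuous b ∧ ∀ x, b x ≤ 1 ∧ squash (s x) < b x ∧
      ∀ y ≥ t x, squash y < b x → (x, y) ∈ W := by
  let D (x : X) : Set ℝ := squash '' {d | Icc (t x) d ⊆ Prod.mk x ⁻¹' W}
  have hbdd (x : X) : BddAbove (D x) :=
    ⟨1, forall_mem_image.2 fun d _ => (squash_mem_Ioo d).2.le⟩
  have hgt (x : X) : ∃ d, Icc (t x) d ⊆ Prod.mk x ⁻¹' W ∧ s x < d := by
    obtain ⟨c, hct, d, hsd, hcd⟩ := hW.exists_lt_Icc_subset_slice hts hsub x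
    exact ⟨d, (Icc_subset_Icc_left hct.le).trans hcd, hsd⟩
  have hne (x : X) : (D x).Nonempty := let ⟨d, hd, _⟩ := hgt x; ⟨_, mem_image_of_mem _ hd⟩
  refine ⟨fun x => sSup (D x), fun x y hy => ?_, fun x => ⟨?_, ?_, fun y hty hy => ?_⟩⟩
  · obtain ⟨_, ⟨d, hd, rfl⟩, hyd⟩ := exists_lt_of_lt_csSup (hne x) hy
    filter_upwards [hW.eventually_Icc_subset_slice_of_lowerSemicontinuous ht hd] with u hu
    exact hyd.trans_le (le_csSup (hbdd u) (mem_image_of_mem _ hu))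
  · exact csSup_le (hne x) (forall_mem_image.2 fun d _ => (squash_mem_Ioo d).2.le)
  · obtain ⟨d, hd, hsd⟩ := hgt x
    exact (squash_strictMono hsd).trans_le (le_csSup (hbdd x) (mem_image_of_mem _ hd))
  · obtain ⟨_, ⟨d, hd, rfl⟩, hyd⟩ := exists_lt_of_lt_csSup (hne x) hy
    exact hd ⟨hty, (squash_strictMono.lt_iff_lt.1 hyd).le⟩

end Slices

theorem IsCusco.exists_continuous_graphOf_subset {X : Type*} [TopologicalSpace X] [NormalSpace X]
    {F W : Set (X × ℝ)} (hF : IsCusco F) (hW : IsOpen W) (hFW : F ⊆ W) :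
    ∃ f : X → ℝ, Continuous f ∧ graphOf f ⊆ W := by
  set q := fun x => sInf (valuesAt F x)
  set p := fun x => sSup (valuesAt F x)
  have hqp : q ≤ p := hF.sInf_le_sSup
  have hsub (x : X) : Icc (q x) (p x) ⊆ Prod.mk x ⁻¹' W :=
    (hF.valuesAt_eq_Icc x).symm.subset.trans fun _ hy => hFW hy
  obtain ⟨a, ha, ha'⟩ := hW.exists_upperSemicontinuous_lower_margin
    hF.upperSemicontinuous_sSup hqp hsub
  obtain ⟨b, hb, hb'⟩ := hW.exists_lowerSemicontinuous_upper_margin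
    hF.lowerSemicontinuous_sInf hqp hsub
  obtain ⟨g, hg, hgab⟩ := exists_continuous_mem_Ioo_of_semicontinuous ha
    (continuous_squash.comp_lowerSemicontinuous hF.lowerSemicontinuous_sInf
      squash_strictMono.monotone)
    (continuous_squash.comp_upperSemicontinuous hF.upperSemicontinuous_sSup
      squash_strictMono.monotone)
    hb (fun x => (ha' x).2.1) (fun x => squash_strictMono.monotone (hqp x))
    (fun x => (hb' x).2.1) (fun x => (ha' x).1) (fun x => (hb' x).1)
  obtain ⟨f, hf, hfg⟩ := hg.exists_squash_comp_eq fun x =>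
    ⟨(ha' x).1.trans_lt (hgab x).1, (hgab x).2.trans_le (hb' x).1⟩
  refine ⟨f, hf, ?_⟩
  rintro ⟨x, y⟩ (rfl : y = f x)
  rcases le_total (f x) (p x) with hfp | hpf
  · exact (ha' x).2.2 _ hfp ((hfg x).symm ▸ (hgab x).1)
  · exact (hb' x).2.2 _ ((hqp x).trans hpf) ((hfg x).symm ▸ (hgab x).2)

lemma valuesAt_graphOf {X : Type*} (f : X → ℝ) (x : X) : valuesAt (graphOf f) x = {f x} := by
  ext y; simp [valuesAt, graphOf]

section Graph

variable {X : Type*} [TopologicalSpace X] {f : X → ℝ}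

lemma Continuous.isCusco_graphOf (hf : Continuous f) : IsCusco (graphOf f) := by
  refine ⟨fun x V hV hfV => ⟨f ⁻¹' V, hV.preimage hf, ?_, fun u hu => ?_⟩, fun x => ?_⟩
  · simpa [valuesAt_graphOf] using hfV
  · simpa [valuesAt_graphOf] using hu
  · simp only [valuesAt_graphOf]
    exact ⟨singleton_nonempty _, isCompact_singleton, convex_singleton _⟩

lemma Continuous.isMinimalCusco_graphOf (hf : Continuous f) : IsMinimalCusco (graphOf f) := by
  refine ⟨hf.isCusco_graphOf, fun G hG hGf => hGf.antisymm ?_⟩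
  rintro ⟨x, y⟩ (rfl : y = f x)
  obtain ⟨z, hz⟩ := (hG.2 x).1
  obtain rfl : z = f x := hGf hz
  exact hz

end Graph

lemma isTopologicalBasis_upperVietoris {X : Type*} [TopologicalSpace X] (S : Set (Set (X × ℝ))) :
    @IsTopologicalBasis S (upperVietoris S)
      {U | ∃ W : Set (X × ℝ), IsOpen W ∧ U = {A : S | (A : Set (X × ℝ)) ⊆ W}} := by
  let _ := upperVietoris S
  refine ⟨?_, ?_, rfl⟩
  · rintro _ ⟨W₁, hW₁, rfl⟩ _ ⟨W₂, hW₂, rfl⟩ A hA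
    exact ⟨_, ⟨W₁ ∩ W₂, hW₁.inter hW₂, rfl⟩, subset_inter hA.1 hA.2,
      fun B hB => ⟨hB.trans inter_subset_left, hB.trans inter_subset_right⟩⟩
  · exact sUnion_eq_univ_iff.2 fun A => ⟨_, ⟨univ, isOpen_univ, rfl⟩, subset_univ _⟩

theorem dense_continuous_graphOf_upperVietoris {X : Type*} [TopologicalSpace X] [NormalSpace X]
    {S : Set (Set (X × ℝ))} (hS : S ⊆ LSet X)
    (hC : ∀ f : X → ℝ, Continuous f → graphOf f ∈ S) :
    @Dense _ (upperVietoris S)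
      {F : S | ∃ f : X → ℝ, Continuous f ∧ (F : Set (X × ℝ)) = graphOf f} := by
  let _ := upperVietoris S
  refine (isTopologicalBasis_upperVietoris S).dense_iff.2 ?_
  rintro _ ⟨W, hW, rfl⟩ ⟨F, hFW⟩
  obtain ⟨f, hf, hfW⟩ := IsCusco.exists_continuous_graphOf_subset (hS F.2) hW hFW
  exact ⟨⟨graphOf f, hC f hf⟩, hfW, f, hf, rfl⟩

theorem continuous_dense_upperVietoris_general {X : Type*} [TopologicalSpace X]
    [NormalSpace X] :
    (@Dense _ (upperVietoris (LSet X))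
        {F : LSet X | ∃ f : X → ℝ, Continuous f ∧ (F : Set (X × ℝ)) = graphOf f}) ∧
    (@Dense _ (upperVietoris (L0Set X))
        {F : L0Set X | ∃ f : X → ℝ, Continuous f ∧ (F : Set (X × ℝ)) = graphOf f}) ∧
    (@Dense _ (upperVietoris (MCSet X))
        {F : MCSet X | ∃ f : X → ℝ, Continuous f ∧ (F : Set (X × ℝ)) = graphOf f}) :=
  ⟨dense_continuous_graphOf_upperVietoris subset_rfl fun _ hf => hf.isCusco_graphOf,
    dense_continuous_graphOf_upperVietoris (fun _ hF => hF.1) fun f hf =>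
      ⟨hf.isCusco_graphOf, fun x _ => ⟨f x, valuesAt_graphOf f x⟩⟩,
    dense_continuous_graphOf_upperVietoris (fun _ hF => hF.1) fun _ hf =>
      hf.isMinimalCusco_graphOf⟩

/-- For normal Hausdorff `X`, the continuous functions (identified with their graphs)
are dense in `(L(X), τ_V⁺)`, `(L₀(X), τ_V⁺)` and `(MC(X), τ_V⁺)`. -/
theorem continuous_dense_upperVietoris {X : Type*} [TopologicalSpace X] [T2Space X]
    [NormalSpace X] :
    (@Dense _ (upperVietoris (LSet X))
        {F : LSet X | ∃ f : X → ℝ, Continuous f ∧ (F : Set (X × ℝ)) = graphOf f}) ∧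
    (@Dense _ (upperVietoris (L0Set X))
        {F : L0Set X | ∃ f : X → ℝ, Continuous f ∧ (F : Set (X × ℝ)) = graphOf f}) ∧
    (@Dense _ (upperVietoris (MCSet X))
        {F : MCSet X | ∃ f : X → ℝ, Continuous f ∧ (F : Set (X × ℝ)) = graphOf f}) :=
  continuous_dense_upperVietoris_general
end
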